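/- arXiv:0709.0986 — 2 statements merged into one kernel-verified Lean document; each statement's English description precedes it below -/
import Mathlib

section
/- Let K be a field and let Λ = Λ(D_n, 1, 2) as above (n ≥ 4). Define the set f² consisting of: f²₁,₁ = β₀β₁ − γ₀γ₁, f²₁,₂ = β₀β₁ − α_{n−2}⋯α₂α₁, f²₂,₁ = α₁β₀, f²₂,₂ = α₁γ₀, f²₂,₃ = β₁α_{n−2}, f²₂,₄ = γ₁α_{n−2}, f²₂,₅ = β₁β₀, f²₂,₆ = γ₁γ₀, and f²₃,ₖ = α_k⋯α₁α_{n−2}⋯α_k for 2 ≤ k ≤ n−3. Then f² is a minimal generating set of the defining ideal I of Λ; in particular no proper subset of f² generates I. -/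
noncomputable section

open Fin.NatCast

/-! ### The quiver `Q(D_n, 1)`: vertices `1, …, n` (vertex `v` ↦ index `v − 1` in `Fin n`),
arrows `α_{n−2} : 1 → n−2`, `α_l : l+1 → l` for `1 ≤ l ≤ n−3` (arrow `α_{k+1}` ↦ index `k`
in `Fin (n−2)`), `β₀ : 1 → n−1`, `β₁ : n−1 → 1`, `γ₀ : 1 → n`, `γ₁ : n → 1`. -/

/-- Generators for the path algebra of `Q(D_n, 1)`. -/
inductive DnGen (n : ℕ) : Type
  | e (i : Fin n) : DnGen n
  | al (k : Fin (n - 2)) : DnGen n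
  | b0 : DnGen n
  | b1 : DnGen n
  | c0 : DnGen n
  | c1 : DnGen n

variable (K : Type) [Field K]

abbrev DnFree (n : ℕ) : Type := FreeAlgebra K (DnGen n)

abbrev Dng {n : ℕ} (g : DnGen n) : DnFree K n := FreeAlgebra.ι K g

/-- The source vertex of the arrow `α_{k+1}`. -/
def DnAlSrc (n : ℕ) [NeZero n] (k : Fin (n - 2)) : Fin n :=
  if (k : ℕ) = n - 3 then 0 else ((k : ℕ) + 1 : ℕ)

/-- The target vertex of the arrow `α_{k+1}`. -/
def DnAlTgt (n : ℕ) [NeZero n] (k : Fin (n - 2)) : Fin n := ((k : ℕ) : Fin n)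

/-- The descending `α`-path `α_hi α_{hi−1} ⋯ α_lo` (1-based subscripts). -/
def Dnadown (n : ℕ) [NeZero (n - 2)] (hi lo : ℕ) : DnFree K n :=
  ((List.range (hi + 1 - lo)).map
    (fun t => Dng K (DnGen.al ((hi - 1 - t : ℕ) : Fin (n - 2))))).prod

/-- Path-algebra relations for the quiver `Q(D_n, 1)`: orthogonal idempotents for the
vertices summing to `1`, and each arrow supported at its source and target vertex. -/
inductive DnQuivRel (n : ℕ) [NeZero n] [NeZero (n - 2)] : DnFree K n → DnFree K n → Prop
  | idem (i j : Fin n) :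
      DnQuivRel n (Dng K (DnGen.e i) * Dng K (DnGen.e j)) (if i = j then Dng K (DnGen.e i) else 0)
  | vsum : DnQuivRel n (∑ i : Fin n, Dng K (DnGen.e i)) 1
  | alsrc (k : Fin (n - 2)) :
      DnQuivRel n (Dng K (DnGen.e (DnAlSrc n k)) * Dng K (DnGen.al k)) (Dng K (DnGen.al k))
  | altgt (k : Fin (n - 2)) :
      DnQuivRel n (Dng K (DnGen.al k) * Dng K (DnGen.e (DnAlTgt n k))) (Dng K (DnGen.al k))
  | b0src : DnQuivRel n (Dng K (DnGen.e 0) * Dng K DnGen.b0) (Dng K DnGen.b0)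
  | b0tgt : DnQuivRel n (Dng K DnGen.b0 * Dng K (DnGen.e ((n - 2 : ℕ) : Fin n))) (Dng K DnGen.b0)
  | b1src : DnQuivRel n (Dng K (DnGen.e ((n - 2 : ℕ) : Fin n)) * Dng K DnGen.b1) (Dng K DnGen.b1)
  | b1tgt : DnQuivRel n (Dng K DnGen.b1 * Dng K (DnGen.e 0)) (Dng K DnGen.b1)
  | c0src : DnQuivRel n (Dng K (DnGen.e 0) * Dng K DnGen.c0) (Dng K DnGen.c0)
  | c0tgt : DnQuivRel n (Dng K DnGen.c0 * Dng K (DnGen.e ((n - 1 : ℕ) : Fin n))) (Dng K DnGen.c0)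
  | c1src : DnQuivRel n (Dng K (DnGen.e ((n - 1 : ℕ) : Fin n)) * Dng K DnGen.c1) (Dng K DnGen.c1)
  | c1tgt : DnQuivRel n (Dng K DnGen.c1 * Dng K (DnGen.e 0)) (Dng K DnGen.c1)

/-- The relations `R(D_n, 1, 2)` of the algebra `Λ(D_n, 1, 2)`:
`β₀β₁ = γ₀γ₁ = α_{n−2}α_{n−3}⋯α₂α₁`, `α₁β₀ = 0`, `α₁γ₀ = 0`, `β₁α_{n−2} = 0`,
`γ₁α_{n−2} = 0`, `β₁β₀ = 0`, `γ₁γ₀ = 0`, and `α_k⋯α₁α_{n−2}⋯α_k = 0` for `2 ≤ k ≤ n−3`,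
together with the path-algebra relations of the quiver. -/
inductive DnRel2 (n : ℕ) [NeZero n] [NeZero (n - 2)] : DnFree K n → DnFree K n → Prop
  | quiv {x y : DnFree K n} : DnQuivRel K n x y → DnRel2 n x y
  | comm1 : DnRel2 n (Dng K DnGen.b0 * Dng K DnGen.b1) (Dng K DnGen.c0 * Dng K DnGen.c1)
  | comm2 : DnRel2 n (Dng K DnGen.b0 * Dng K DnGen.b1) (Dnadown K n (n - 2) 1)
  | z1 : DnRel2 n (Dng K (DnGen.al 0) * Dng K DnGen.b0) 0
  | z2 : DnRel2 n (Dng K (DnGen.al 0) * Dng K DnGen.c0) 0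
  | z3 : DnRel2 n (Dng K DnGen.b1 * Dng K (DnGen.al ((n - 3 : ℕ) : Fin (n - 2)))) 0
  | z4 : DnRel2 n (Dng K DnGen.c1 * Dng K (DnGen.al ((n - 3 : ℕ) : Fin (n - 2)))) 0
  | z5 : DnRel2 n (Dng K DnGen.b1 * Dng K DnGen.b0) 0
  | z6 : DnRel2 n (Dng K DnGen.c1 * Dng K DnGen.c0) 0
  | z7 (k : ℕ) (h1 : 2 ≤ k) (h2 : k ≤ n - 3) :
      DnRel2 n (Dnadown K n k 1 * Dnadown K n (n - 2) k) 0

/-- The self-injective algebra `Λ(D_n, 1, 2)` of Asashiba's classification. -/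
abbrev DnAlg2 (n : ℕ) [NeZero n] [NeZero (n - 2)] : Type := RingQuot (DnRel2 K n)

/-- The path algebra `KQ` of the quiver `Q(D_n, 1)`. -/
abbrev DnPathAlg (n : ℕ) [NeZero n] [NeZero (n - 2)] : Type := RingQuot (DnQuivRel K n)

/-- The canonical image of a free-algebra element in the path algebra. -/
abbrev Dnπ (n : ℕ) [NeZero n] [NeZero (n - 2)] (x : DnFree K n) : DnPathAlg K n :=
  RingQuot.mkAlgHom K (DnQuivRel K n) x

/-- The cyclic descending `α`-path of `len` arrows starting with `α_j`
(subscripts taken in `{1, …, n−2}` cyclically). -/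
def Dnacyc (n : ℕ) [NeZero (n - 2)] (j len : ℕ) : DnFree K n :=
  ((List.range len).map
    (fun t => Dng K (DnGen.al (((j - 1 : ℕ) : Fin (n - 2)) - ((t : ℕ) : Fin (n - 2)))))).prod

/-- The set of relations `R(D_n, 1, 2)` as elements of the path algebra `KQ`. -/
def DnRelSet (n : ℕ) [NeZero n] [NeZero (n - 2)] : Set (DnPathAlg K n) :=
  {Dnπ K n (Dng K DnGen.b0 * Dng K DnGen.b1 - Dng K DnGen.c0 * Dng K DnGen.c1),
   Dnπ K n (Dng K DnGen.b0 * Dng K DnGen.b1 - Dnadown K n (n - 2) 1),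
   Dnπ K n (Dng K (DnGen.al 0) * Dng K DnGen.b0),
   Dnπ K n (Dng K (DnGen.al 0) * Dng K DnGen.c0),
   Dnπ K n (Dng K DnGen.b1 * Dng K (DnGen.al ((n - 3 : ℕ) : Fin (n - 2)))),
   Dnπ K n (Dng K DnGen.c1 * Dng K (DnGen.al ((n - 3 : ℕ) : Fin (n - 2)))),
   Dnπ K n (Dng K DnGen.b1 * Dng K DnGen.b0),
   Dnπ K n (Dng K DnGen.c1 * Dng K DnGen.c0),
   Dnπ K n (Dng K DnGen.b0 * Dng K DnGen.b1 * Dng K DnGen.c0),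
   Dnπ K n (Dng K DnGen.c0 * Dng K DnGen.c1 * Dng K DnGen.b0),
   Dnπ K n (Dng K DnGen.b1 * Dng K DnGen.c0 * Dng K DnGen.c1),
   Dnπ K n (Dng K DnGen.c1 * Dng K DnGen.b0 * Dng K DnGen.b1)} ∪
  {x | ∃ j : ℕ, 1 ≤ j ∧ j ≤ n - 2 ∧ x = Dnπ K n (Dnacyc K n j (n - 1))}

/-- The proposed minimal generating set `f²` of the defining ideal, as elements of `KQ`. -/
def DnF2Set (n : ℕ) [NeZero n] [NeZero (n - 2)] : Set (DnPathAlg K n) :=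
  {Dnπ K n (Dng K DnGen.b0 * Dng K DnGen.b1 - Dng K DnGen.c0 * Dng K DnGen.c1),
   Dnπ K n (Dng K DnGen.b0 * Dng K DnGen.b1 - Dnadown K n (n - 2) 1),
   Dnπ K n (Dng K (DnGen.al 0) * Dng K DnGen.b0),
   Dnπ K n (Dng K (DnGen.al 0) * Dng K DnGen.c0),
   Dnπ K n (Dng K DnGen.b1 * Dng K (DnGen.al ((n - 3 : ℕ) : Fin (n - 2)))),
   Dnπ K n (Dng K DnGen.c1 * Dng K (DnGen.al ((n - 3 : ℕ) : Fin (n - 2)))),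
   Dnπ K n (Dng K DnGen.b1 * Dng K DnGen.b0),
   Dnπ K n (Dng K DnGen.c1 * Dng K DnGen.c0)} ∪
  {x | ∃ k : ℕ, 2 ≤ k ∧ k ≤ n - 3 ∧ x = Dnπ K n (Dnadown K n k 1 * Dnadown K n (n - 2) k)}

/-!
The relations of `R(D_n, 1, 2)` missing from `f²` are the cubic paths `β₀β₁γ₀`, `γ₀γ₁β₀`,
`β₁γ₀γ₁`, `γ₁β₀β₁` and the cycles `α₁α_{n−2} ⋯ α₁`, `α_{n−2} ⋯ α₁α_{n−2}`. Trading `β₀β₁` for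
`γ₀γ₁` or `α_{n−2} ⋯ α₁` (or back) modulo a binomial of `f²` turns each of them into a path
multiple of a monomial of `f²`, so both sets generate the same ideal.

For minimality, each `f ∈ f²` has a leading path `w`: `γ₀γ₁` for `β₀β₁ − γ₀γ₁`,
`α_{n−2} ⋯ α₁` for `β₀β₁ − α_{n−2} ⋯ α₁`, and `f` itself otherwise. In the string
representation of `KQ` along the walk `w`, a path acts by zero exactly when it is not a subword
of `w`. The paths occurring in `f²` form an antichain for the subword order, so this
representation kills every element of `f²` except `f`, and `f` is not in the ideal generated by
the others.
-/

section GuardedShift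

variable {R : Type*} [Semiring R]

open Classical in
def guardedShift (p : ℕ → Prop) (d : ℕ) : Module.End R (ℕ → R) where
  toFun v t := if p t then v (t + d) else 0
  map_add' u v := by funext t; by_cases h : p t <;> simp [h]
  map_smul' a v := by funext t; by_cases h : p t <;> simp [h]

open Classical in
theorem guardedShift_apply (p : ℕ → Prop) (d : ℕ) (v : ℕ → R) (t : ℕ) :
    guardedShift p d v t = if p t then v (t + d) else 0 := rfl

theorem guardedShift_mul (p q : ℕ → Prop) (d e : ℕ) :
    guardedShift (R := R) p d * guardedShift q e =
      guardedShift (fun t => p t ∧ q (t + d)) (d + e) := by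
  ext v t
  simp only [Module.End.mul_apply, guardedShift_apply, add_assoc]
  by_cases hp : p t <;> by_cases hq : q (t + d) <;> simp [hp, hq]

theorem guardedShift_true : guardedShift (R := R) (fun _ => True) 0 = 1 := by
  ext v t
  simp [guardedShift_apply]

theorem guardedShift_eq_zero_iff [Nontrivial R] {p : ℕ → Prop} {d : ℕ} :
    guardedShift (R := R) p d = 0 ↔ ∀ t, ¬ p t := by
  refine ⟨fun h t ht => ?_, fun h => ?_⟩
  · simpa [guardedShift_apply, ht] using congrFun (LinearMap.congr_fun h fun _ => 1) t
  · ext v t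
    simp [guardedShift_apply, h t]

theorem sum_guardedShift_fiber {ι : Type*} [Fintype ι] (f : ℕ → ι) :
    ∑ i, guardedShift (R := R) (fun t => f t = i) 0 = 1 := by
  ext v t
  classical
  simp [guardedShift_apply, Finset.sum_apply, LinearMap.sum_apply]

end GuardedShift

theorem TwoSidedIdeal.eq_of_span_eq_of_separated {R A : Type*} [Ring R] [Ring A] {F S : Set R}
    (hsep : ∀ f ∈ F, ∃ φ : R →+* A, φ f ≠ 0 ∧ ∀ g ∈ F, g ≠ f → φ g = 0) (hSF : S ⊆ F)
    (hspan : span S = span F) : S = F := by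
  refine hSF.antisymm fun f hf => by_contra fun hfS => ?_
  obtain ⟨φ, hφf, hφ⟩ := hsep f hf
  have hker : span F ≤ ker φ := hspan ▸ span_le.2 fun g hg =>
    (mem_ker φ).2 (hφ g (hSF hg) (by rintro rfl; exact hfS hg))
  exact hφf ((mem_ker φ).1 (hker (subset_span hf)))

theorem TwoSidedIdeal.mem_iff_of_sub_mem {R : Type*} [NonUnitalNonAssocRing R]
    {I : TwoSidedIdeal R} {x y : R} (h : x - y ∈ I) : x ∈ I ↔ y ∈ I :=
  ⟨fun hx => by simpa using I.sub_mem hx h, fun hy => by simpa using I.add_mem h hy⟩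

theorem TwoSidedIdeal.mul_mem_right_iff_of_sub_mem {R : Type*} [NonUnitalNonAssocRing R]
    {I : TwoSidedIdeal R} {p q : R} (h : p - q ∈ I) (c : R) : p * c ∈ I ↔ q * c ∈ I :=
  mem_iff_of_sub_mem (by simpa [sub_mul] using I.mul_mem_right _ c h)

theorem TwoSidedIdeal.mul_mem_left_iff_of_sub_mem {R : Type*} [NonUnitalNonAssocRing R]
    {I : TwoSidedIdeal R} {p q : R} (h : p - q ∈ I) (c : R) : c * p ∈ I ↔ c * q ∈ I :=
  mem_iff_of_sub_mem (by simpa [mul_sub] using I.mul_mem_left c _ h)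

theorem Fin.natCast_sub_of_le {m : ℕ} [NeZero m] {a b : ℕ} (h : b ≤ a) :
    ((a - b : ℕ) : Fin m) = a - b :=
  eq_sub_of_add_eq (by rw [← Nat.cast_add, Nat.sub_add_cancel h])

theorem Fin.eq_of_natCast_eq_of_lt {m : ℕ} [NeZero m] {a b : ℕ} (ha : a < m) (hb : b < m)
    (h : (a : Fin m) = b) : a = b := by
  simpa [Fin.val_cast_of_lt ha, Fin.val_cast_of_lt hb] using congrArg Fin.val h

section Occurrences

variable {X : Type*}

theorem List.infix_iff_exists_prefix_drop {l w : List X} : l <:+: w ↔ ∃ t, l <+: w.drop t := by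
  constructor
  · rintro ⟨s, u, rfl⟩
    exact ⟨s.length, by simp⟩
  · rintro ⟨t, h⟩
    exact h.isInfix.trans (List.drop_suffix t w).isInfix

theorem List.cons_prefix_drop_iff {x : X} {l w : List X} {t : ℕ} :
    x :: l <+: w.drop t ↔ w[t]? = some x ∧ l <+: w.drop (t + 1) := by
  rw [← List.head?_drop, ← List.tail_drop]
  cases w.drop t <;> simp [eq_comm]

variable {R : Type*} [Semiring R]

def letterShift (w : List X) (x : X) : Module.End R (ℕ → R) :=
  guardedShift (fun t => w[t]? = some x) 1

theorem prod_map_letterShift (w l : List X) :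
    (l.map (letterShift (R := R) w)).prod = guardedShift (fun t => l <+: w.drop t) l.length := by
  induction l with
  | nil => simp [guardedShift_true]
  | cons x l ih =>
    rw [List.map_cons, List.prod_cons, ih, letterShift, guardedShift_mul, List.length_cons,
      add_comm 1]
    simp_rw [List.cons_prefix_drop_iff]

end Occurrences

theorem lift_prod_ι_eq_zero_iff {R X : Type*} [CommSemiring R] [Nontrivial R]
    {φ : X → Module.End R (ℕ → R)} {w l : List X} (hl : ∀ x ∈ l, φ x = letterShift w x) :
    FreeAlgebra.lift R φ (l.map (FreeAlgebra.ι R)).prod = 0 ↔ ¬ l <:+: w := by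
  have hφ : ∀ x ∈ l, (FreeAlgebra.lift R φ ∘ FreeAlgebra.ι R) x = letterShift w x :=
    fun x hx => (FreeAlgebra.lift_ι_apply φ x).trans (hl x hx)
  rw [map_list_prod, List.map_map, List.map_congr_left hφ, prod_map_letterShift,
    guardedShift_eq_zero_iff, List.infix_iff_exists_prefix_drop, not_exists]

namespace DnGen

variable {n : ℕ}

def IsArrow : DnGen n → Prop
  | e _ => False
  | _ => True

def IsAlpha : DnGen n → Prop
  | al _ => True
  | _ => False

variable [NeZero n]

/-- Junk value `0` on the vertex generators. -/
def src : DnGen n → Fin n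
  | e _ => 0
  | al k => DnAlSrc n k
  | b0 => 0
  | b1 => ((n - 2 : ℕ) : Fin n)
  | c0 => 0
  | c1 => ((n - 1 : ℕ) : Fin n)

/-- Junk value `0` on the vertex generators. -/
def tgt : DnGen n → Fin n
  | e _ => 0
  | al k => DnAlTgt n k
  | b0 => ((n - 2 : ℕ) : Fin n)
  | b1 => 0
  | c0 => ((n - 1 : ℕ) : Fin n)
  | c1 => 0

end DnGen

section Words

variable {n : ℕ}

def Dnword (l : List (DnGen n)) : DnFree K n := (l.map (Dng K)).prod

theorem Dnword_append (l l' : List (DnGen n)) :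
    Dnword K (l ++ l') = Dnword K l * Dnword K l' := by
  simp [Dnword]

theorem Dnword_pair (x y : DnGen n) : Dnword K [x, y] = Dng K x * Dng K y := by
  simp [Dnword]

end Words

section Walks

variable {n : ℕ} [NeZero n]

def IsDnWalk (w : List (DnGen n)) : Prop := w.IsChain fun a b => a.tgt = b.src

/-- The vertex reached after `t` steps along `w`. -/
def walkVertex (w : List (DnGen n)) : ℕ → Fin n
  | 0 => (w.head?.map DnGen.src).getD 0
  | t + 1 => (w[t]?.map DnGen.tgt).getD 0

theorem walkVertex_eq_src {w : List (DnGen n)} (hw : IsDnWalk w) {t : ℕ} (ht : t < w.length) :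
    walkVertex w t = w[t].src := by
  cases t with
  | zero =>
    obtain ⟨a, w, rfl⟩ := List.exists_cons_of_length_pos ht
    rfl
  | succ t =>
    simp [walkVertex, List.getElem?_eq_getElem (Nat.lt_of_succ_lt ht),
      List.isChain_iff_getElem.mp hw t ht]

theorem walkVertex_succ {w : List (DnGen n)} {t : ℕ} (ht : t < w.length) :
    walkVertex w (t + 1) = w[t].tgt := by
  simp [walkVertex, List.getElem?_eq_getElem ht]

end Walks

section WalkRep

variable {n : ℕ} [NeZero n]

/-- The generators' action in the string representation of `Q(D_n, 1)` along the walk `w`. -/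
def walkGen (w : List (DnGen n)) : DnGen n → Module.End K (ℕ → K)
  | .e i => guardedShift (fun t => walkVertex w t = i) 0
  | g => letterShift w g

theorem walkGen_of_isArrow (w : List (DnGen n)) {g : DnGen n} (hg : g.IsArrow) :
    walkGen K w g = letterShift w g := by
  cases g <;> first | exact hg.elim | rfl

theorem walkGen_src_mul {w : List (DnGen n)} (hw : IsDnWalk w) {g : DnGen n} (hg : g.IsArrow) :
    walkGen K w (.e g.src) * walkGen K w g = walkGen K w g := by
  rw [walkGen_of_isArrow K w hg, walkGen, letterShift, guardedShift_mul, zero_add]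
  congr with t
  simp only [add_zero, and_iff_right_iff_imp, List.getElem?_eq_some_iff]
  rintro ⟨ht, rfl⟩
  exact walkVertex_eq_src hw ht

theorem walkGen_mul_tgt (w : List (DnGen n)) {g : DnGen n} (hg : g.IsArrow) :
    walkGen K w g * walkGen K w (.e g.tgt) = walkGen K w g := by
  rw [walkGen_of_isArrow K w hg, walkGen, letterShift, guardedShift_mul, add_zero]
  congr with t
  simp only [and_iff_left_iff_imp, List.getElem?_eq_some_iff]
  rintro ⟨ht, rfl⟩
  exact walkVertex_succ ht

variable [NeZero (n - 2)]

theorem walkGen_respects_quivRel {w : List (DnGen n)} (hw : IsDnWalk w) ⦃x y : DnFree K n⦄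
    (h : DnQuivRel K n x y) :
    FreeAlgebra.lift K (walkGen K w) x = FreeAlgebra.lift K (walkGen K w) y := by
  have hsrc : ∀ g : DnGen n, g.IsArrow → FreeAlgebra.lift K (walkGen K w)
      (Dng K (.e g.src) * Dng K g) = FreeAlgebra.lift K (walkGen K w) (Dng K g) := fun g hg => by
    simpa only [map_mul, FreeAlgebra.lift_ι_apply] using walkGen_src_mul K hw hg
  have htgt : ∀ g : DnGen n, g.IsArrow → FreeAlgebra.lift K (walkGen K w)
      (Dng K g * Dng K (.e g.tgt)) = FreeAlgebra.lift K (walkGen K w) (Dng K g) := fun g hg => by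
    simpa only [map_mul, FreeAlgebra.lift_ι_apply] using walkGen_mul_tgt K w hg
  cases h with
  | idem i j =>
    simp only [map_mul, FreeAlgebra.lift_ι_apply, walkGen, guardedShift_mul, add_zero]
    split_ifs with hij
    · subst hij
      simp only [and_self, FreeAlgebra.lift_ι_apply]
      rfl
    · rw [map_zero, guardedShift_eq_zero_iff]
      exact fun t ht => hij (ht.1.symm.trans ht.2)
  | vsum => simpa [walkGen] using sum_guardedShift_fiber (walkVertex w)
  | alsrc k => exact hsrc (.al k) trivial
  | altgt k => exact htgt (.al k) trivial
  | b0src => exact hsrc .b0 trivial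
  | b0tgt => exact htgt .b0 trivial
  | b1src => exact hsrc .b1 trivial
  | b1tgt => exact htgt .b1 trivial
  | c0src => exact hsrc .c0 trivial
  | c0tgt => exact htgt .c0 trivial
  | c1src => exact hsrc .c1 trivial
  | c1tgt => exact htgt .c1 trivial

def walkRep (w : List (DnGen n)) (hw : IsDnWalk w) : DnPathAlg K n →ₐ[K] Module.End K (ℕ → K) :=
  RingQuot.liftAlgHom K ⟨FreeAlgebra.lift K (walkGen K w), walkGen_respects_quivRel K hw⟩

theorem walkRep_word_eq_zero_iff {w : List (DnGen n)} (hw : IsDnWalk w) {l : List (DnGen n)}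
    (hl : ∀ g ∈ l, g.IsArrow) : walkRep K w hw (Dnπ K n (Dnword K l)) = 0 ↔ ¬ l <:+: w := by
  rw [walkRep, Dnπ, RingQuot.liftAlgHom_mkAlgHom_apply]
  exact lift_prod_ι_eq_zero_iff fun g hg => walkGen_of_isArrow K w (hl g hg)

end WalkRep

theorem DnAlSrc_eq_DnAlTgt_add_one {n : ℕ} [NeZero n] [NeZero (n - 2)] (b : Fin (n - 2)) :
    DnAlSrc n b = DnAlTgt n (b + 1) := by
  have hb := b.isLt
  have hval : ((b + 1 : Fin (n - 2)) : ℕ) = (b + 1) % (n - 2) := by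
    rw [Fin.val_add, Fin.val_one', Nat.add_mod_mod]
  rw [DnAlSrc, DnAlTgt, hval]
  split_ifs with h
  · rw [h, show n - 3 + 1 = n - 2 by omega, Nat.mod_self, Nat.cast_zero]
  · rw [Nat.mod_eq_of_lt (by omega)]

section AlphaRuns

variable {n : ℕ} [NeZero (n - 2)]

/-- The run `α_{a+1} α_a α_{a−1} ⋯` of `len` consecutive arrows, subscripts read cyclically. -/
def alphaRun (a : Fin (n - 2)) (len : ℕ) : List (DnGen n) :=
  (List.range len).map fun t : ℕ => .al (a - (t : Fin (n - 2)))

@[simp]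
theorem length_alphaRun (a : Fin (n - 2)) (len : ℕ) : (alphaRun a len).length = len := by
  simp [alphaRun]

@[simp]
theorem getElem_alphaRun (a : Fin (n - 2)) (len t : ℕ) (ht : t < (alphaRun a len).length) :
    (alphaRun (n := n) a len)[t] = .al (a - (t : Fin (n - 2))) := by
  simp [alphaRun]

theorem alphaRun_add (a : Fin (n - 2)) (l₁ l₂ : ℕ) :
    alphaRun (n := n) a (l₁ + l₂) = alphaRun a l₁ ++ alphaRun (a - (l₁ : Fin (n - 2))) l₂ := by
  simp [alphaRun, List.range_add, sub_sub]

theorem isAlpha_of_mem_alphaRun {a : Fin (n - 2)} {len : ℕ} {g : DnGen n}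
    (hg : g ∈ alphaRun a len) : g.IsAlpha := by
  obtain ⟨t, -, rfl⟩ := List.mem_map.mp hg
  trivial

theorem isArrow_of_mem_alphaRun [NeZero n] {a : Fin (n - 2)} {len : ℕ} {g : DnGen n}
    (hg : g ∈ alphaRun a len) : g.IsArrow := by
  obtain ⟨t, -, rfl⟩ := List.mem_map.mp hg
  trivial

theorem isDnWalk_alphaRun [NeZero n] (a : Fin (n - 2)) (len : ℕ) :
    IsDnWalk (alphaRun (n := n) a len) := by
  refine List.isChain_iff_getElem.mpr fun t ht => ?_
  simp only [getElem_alphaRun, DnGen.tgt, DnGen.src, DnAlSrc_eq_DnAlTgt_add_one, Nat.cast_succ]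
  congr 2
  abel

theorem exists_eq_sub_of_alphaRun_infix {a b : Fin (n - 2)} {l m : ℕ} (hl : 0 < l)
    (h : alphaRun (n := n) a l <:+: alphaRun b m) :
    ∃ t : ℕ, t + l ≤ m ∧ a = b - (t : Fin (n - 2)) := by
  obtain ⟨t, hle, ht⟩ := List.infix_iff_getElem?.mp h
  have := ht 0 (by simpa using hl)
  simp only [length_alphaRun, zero_add, getElem_alphaRun, Nat.cast_zero, sub_zero] at hle this
  rw [List.getElem?_eq_getElem (by simp; omega)] at this
  simp only [getElem_alphaRun, Option.some.injEq, DnGen.al.injEq] at this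
  exact ⟨t, by omega, this.symm⟩

end AlphaRuns

section Paths

variable (n : ℕ) [NeZero (n - 2)]

/-- `α_{n−2} α_{n−3} ⋯ α₁`. -/
def downPath : List (DnGen n) := alphaRun ((n - 3 : ℕ) : Fin (n - 2)) (n - 2)

/-- `α_k ⋯ α₁ α_{n−2} ⋯ α_k`. -/
def cyclePath (k : ℕ) : List (DnGen n) := alphaRun ((k - 1 : ℕ) : Fin (n - 2)) (n - 1)

theorem Dnadown_eq_Dnword_alphaRun (hi : ℕ) {lo : ℕ} (hlo : 1 ≤ lo) :
    Dnadown K n hi lo = Dnword K (alphaRun ((hi - 1 : ℕ) : Fin (n - 2)) (hi + 1 - lo)) := by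
  simp only [Dnadown, Dnword, alphaRun, List.map_map]
  refine congrArg _ (List.map_congr_left fun t ht => ?_)
  rw [List.mem_range] at ht
  simp only [Function.comp_apply, Fin.natCast_sub_of_le (by omega : t ≤ hi - 1)]

theorem Dnadown_eq_downPath : Dnadown K n (n - 2) 1 = Dnword K (downPath n) :=
  Dnadown_eq_Dnword_alphaRun K n (n - 2) le_rfl

theorem Dnacyc_eq_cyclePath (k : ℕ) : Dnacyc K n k (n - 1) = Dnword K (cyclePath n k) := by
  simp only [Dnacyc, Dnword, cyclePath, alphaRun, List.map_map]
  rfl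

theorem Dnadown_mul_Dnadown {k : ℕ} (hk1 : 1 ≤ k) (hk2 : k ≤ n - 2) :
    Dnadown K n k 1 * Dnadown K n (n - 2) k = Dnword K (cyclePath n k) := by
  have hwrap : ((k - 1 : ℕ) : Fin (n - 2)) - (k : Fin (n - 2)) = ((n - 3 : ℕ) : Fin (n - 2)) := by
    rw [sub_eq_iff_eq_add, ← Nat.cast_add, show n - 3 + k = k - 1 + (n - 2) by omega,
      Nat.cast_add, Fin.natCast_self, add_zero]
  rw [Dnadown_eq_Dnword_alphaRun K n k le_rfl, Dnadown_eq_Dnword_alphaRun K n (n - 2) hk1,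
    ← Dnword_append, show k + 1 - 1 = k by omega, show n - 2 - 1 = n - 3 by omega, ← hwrap,
    ← alphaRun_add, cyclePath, show k + (n - 2 + 1 - k) = n - 1 by omega]

theorem Dnadown_self (k : ℕ) : Dnadown K n k k = Dng K (.al ((k - 1 : ℕ) : Fin (n - 2))) := by
  simp [Dnadown]

def twoArrowPaths : Set (List (DnGen n)) :=
  {[.b0, .b1], [.c0, .c1], [.al 0, .b0], [.al 0, .c0], [.b1, .al ((n - 3 : ℕ) : Fin (n - 2))],
    [.c1, .al ((n - 3 : ℕ) : Fin (n - 2))], [.b1, .b0], [.c1, .c0]}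

def alphaPaths : Set (List (DnGen n)) :=
  insert (downPath n) {p | ∃ k, 2 ≤ k ∧ k ≤ n - 3 ∧ p = cyclePath n k}

variable {n}

theorem twoArrowPaths_spec {p : List (DnGen n)} (hp : p ∈ twoArrowPaths n) :
    p.length = 2 ∧ ∃ g ∈ p, ¬ g.IsAlpha := by
  simp only [twoArrowPaths, Set.mem_insert_iff, Set.mem_singleton_iff] at hp
  rcases hp with rfl | rfl | rfl | rfl | rfl | rfl | rfl | rfl <;> simp [DnGen.IsAlpha]

theorem alphaPaths_spec (hn : 4 ≤ n) {p : List (DnGen n)} (hp : p ∈ alphaPaths n) :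
    2 ≤ p.length ∧ ∀ g ∈ p, g.IsAlpha := by
  rcases hp with rfl | ⟨k, -, -, rfl⟩
  · exact ⟨by simp [downPath]; omega, fun g => isAlpha_of_mem_alphaRun⟩
  · exact ⟨by simp [cyclePath]; omega, fun g => isAlpha_of_mem_alphaRun⟩

theorem ne_of_mem_twoArrowPaths_of_mem_alphaPaths (hn : 4 ≤ n) {p q : List (DnGen n)}
    (hp : p ∈ twoArrowPaths n) (hq : q ∈ alphaPaths n) : p ≠ q := by
  rintro rfl
  obtain ⟨-, g, hg, hα⟩ := twoArrowPaths_spec hp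
  exact hα ((alphaPaths_spec hn hq).2 g hg)

theorem downPath_not_infix_cyclePath {k : ℕ} (hk2 : 2 ≤ k) (hk3 : k ≤ n - 3) :
    ¬ downPath n <:+: cyclePath n k := by
  intro h
  obtain ⟨t, ht, heq⟩ := exists_eq_sub_of_alphaRun_infix (by omega) h
  rw [← Fin.natCast_sub_of_le (by omega : t ≤ k - 1)] at heq
  have := Fin.eq_of_natCast_eq_of_lt (by omega) (by omega) heq
  omega

theorem isAntichain_infix_paths (hn : 4 ≤ n) :
    IsAntichain List.IsInfix (twoArrowPaths n ∪ alphaPaths n) := by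
  intro p hp q hq hne hpq
  refine hne (hpq.eq_of_length_le ?_)
  rcases hp with hp | hp <;> rcases hq with hq | hq
  · rw [(twoArrowPaths_spec hp).1, (twoArrowPaths_spec hq).1]
  · obtain ⟨-, g, hg, hα⟩ := twoArrowPaths_spec hp
    exact absurd ((alphaPaths_spec hn hq).2 g (hpq.subset hg)) hα
  · rw [(twoArrowPaths_spec hq).1]
    exact (alphaPaths_spec hn hp).1
  · rcases hp with rfl | ⟨k, -, -, rfl⟩ <;> rcases hq with rfl | ⟨k', hk2, hk3, rfl⟩
    · exact le_rfl
    · exact absurd hpq (downPath_not_infix_cyclePath hk2 hk3)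
    · simp only [downPath, cyclePath, length_alphaRun]
      omega
    · simp [cyclePath]

end Paths

section Separation

variable {n : ℕ} [NeZero n] [NeZero (n - 2)]

theorem isDnWalk_of_mem_paths {p : List (DnGen n)} (hp : p ∈ twoArrowPaths n ∪ alphaPaths n) :
    IsDnWalk p := by
  have hn : n - 3 < n - 2 := by have := NeZero.ne (n - 2); omega
  rcases hp with hp | hp
  · simp only [twoArrowPaths, Set.mem_insert_iff, Set.mem_singleton_iff] at hp
    rcases hp with rfl | rfl | rfl | rfl | rfl | rfl | rfl | rfl <;>
      simp [IsDnWalk, DnGen.tgt, DnGen.src, DnAlTgt, DnAlSrc, Fin.val_cast_of_lt hn]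
  · rcases hp with rfl | ⟨k, -, -, rfl⟩ <;> exact isDnWalk_alphaRun _ _

theorem isArrow_of_mem_paths {p : List (DnGen n)} (hp : p ∈ twoArrowPaths n ∪ alphaPaths n) :
    ∀ g ∈ p, g.IsArrow := by
  rcases hp with hp | hp
  · simp only [twoArrowPaths, Set.mem_insert_iff, Set.mem_singleton_iff] at hp
    rcases hp with rfl | rfl | rfl | rfl | rfl | rfl | rfl | rfl <;> simp [DnGen.IsArrow]
  · rcases hp with rfl | ⟨k, -, -, rfl⟩ <;> exact fun g => isArrow_of_mem_alphaRun

theorem walkRep_path_eq_zero_iff (hn : 4 ≤ n) {v w : List (DnGen n)}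
    (hv : v ∈ twoArrowPaths n ∪ alphaPaths n) (hw : w ∈ twoArrowPaths n ∪ alphaPaths n) :
    walkRep K w (isDnWalk_of_mem_paths hw) (Dnπ K n (Dnword K v)) = 0 ↔ v ≠ w := by
  rw [walkRep_word_eq_zero_iff K _ (isArrow_of_mem_paths hv)]
  exact ⟨fun h hvw => h (hvw ▸ List.infix_refl v),
    fun hvw hvw' => isAntichain_infix_paths hn hv hw hvw hvw'⟩

end Separation

section Leads

variable (n : ℕ) [NeZero n] [NeZero (n - 2)]

def binomialLeads : Set (List (DnGen n)) := {[.c0, .c1], downPath n}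

def leadPaths : Set (List (DnGen n)) := (twoArrowPaths n ∪ alphaPaths n) \ {[.b0, .b1]}

open Classical in
/-- The element of `f²` with leading path `w`. -/
def f2Elem (w : List (DnGen n)) : DnPathAlg K n :=
  if w ∈ binomialLeads n then Dnπ K n (Dnword K [.b0, .b1]) - Dnπ K n (Dnword K w)
  else Dnπ K n (Dnword K w)

variable {n}

theorem DnF2Set_subset_image_f2Elem (hn : 4 ≤ n) : DnF2Set K n ⊆ f2Elem K n '' leadPaths n := by
  have hdown : downPath n ∈ alphaPaths n := Set.mem_insert _ _
  have hcycle {k : ℕ} (hk2 : 2 ≤ k) (hk3 : k ≤ n - 3) : cyclePath n k ∈ alphaPaths n :=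
    Or.inr ⟨k, hk2, hk3, rfl⟩
  have htwo {p : List (DnGen n)} (hp : p ∈ twoArrowPaths n) (hb : p ≠ [.b0, .b1])
      (hc : p ≠ [.c0, .c1]) : Dnπ K n (Dnword K p) ∈ f2Elem K n '' leadPaths n :=
    ⟨p, ⟨Or.inl hp, hb⟩, if_neg (by
      rintro (h | h)
      exacts [hc h, ne_of_mem_twoArrowPaths_of_mem_alphaPaths hn hp hdown h])⟩
  rintro f (hf | ⟨k, hk2, hk3, rfl⟩)
  · simp only [Set.mem_insert_iff, Set.mem_singleton_iff] at hf
    rcases hf with rfl | rfl | rfl | rfl | rfl | rfl | rfl | rfl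
    · refine ⟨[.c0, .c1], ⟨Or.inl (by simp [twoArrowPaths]), by simp⟩, ?_⟩
      simp [f2Elem, binomialLeads, Dnword_pair]
    · refine ⟨downPath n, ⟨Or.inr hdown,
        (ne_of_mem_twoArrowPaths_of_mem_alphaPaths hn (by simp [twoArrowPaths]) hdown).symm⟩, ?_⟩
      simp [f2Elem, binomialLeads, Dnword_pair, Dnadown_eq_downPath]
    all_goals
      rw [← Dnword_pair]
      exact htwo (by simp [twoArrowPaths]) (by simp) (by simp)
  · refine ⟨cyclePath n k, ⟨Or.inr (hcycle hk2 hk3), (ne_of_mem_twoArrowPaths_of_mem_alphaPaths hn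
      (by simp [twoArrowPaths]) (hcycle hk2 hk3)).symm⟩, ?_⟩
    rw [f2Elem, if_neg, Dnadown_mul_Dnadown K n (by omega) (by omega)]
    rintro (h | h)
    · exact ne_of_mem_twoArrowPaths_of_mem_alphaPaths hn (by simp [twoArrowPaths])
        (hcycle hk2 hk3) h.symm
    · have := congrArg List.length h
      simp only [cyclePath, downPath, length_alphaRun] at this
      omega

theorem exists_ringHom_separating_DnF2Set (hn : 4 ≤ n) {f : DnPathAlg K n}
    (hf : f ∈ DnF2Set K n) : ∃ φ : DnPathAlg K n →+* Module.End K (ℕ → K),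
      φ f ≠ 0 ∧ ∀ g ∈ DnF2Set K n, g ≠ f → φ g = 0 := by
  obtain ⟨w, ⟨hw, hwb⟩, rfl⟩ := DnF2Set_subset_image_f2Elem K hn hf
  have hkill {v : List (DnGen n)} (hv : v ∈ twoArrowPaths n ∪ alphaPaths n) (hvw : v ≠ w) :
      walkRep K w (isDnWalk_of_mem_paths hw) (Dnπ K n (Dnword K v)) = 0 :=
    (walkRep_path_eq_zero_iff K hn hv hw).2 hvw
  have hb0b1 := hkill (Or.inl (by simp [twoArrowPaths])) (Ne.symm hwb)
  have hwalk : walkRep K w (isDnWalk_of_mem_paths hw) (Dnπ K n (Dnword K w)) ≠ 0 :=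
    (walkRep_path_eq_zero_iff K hn hw hw).not.2 (not_not.2 rfl)
  refine ⟨(walkRep K w (isDnWalk_of_mem_paths hw)).toRingHom, ?_, ?_⟩
  · unfold f2Elem
    split_ifs <;> simpa [hb0b1] using hwalk
  · rintro g hg hne
    obtain ⟨v, ⟨hv, -⟩, rfl⟩ := DnF2Set_subset_image_f2Elem K hn hg
    have hvw : v ≠ w := by rintro rfl; exact hne rfl
    unfold f2Elem
    split_ifs <;> simp [hb0b1, hkill hv hvw]

end Leads

section Span

open TwoSidedIdeal

variable {n : ℕ} [NeZero n] [NeZero (n - 2)]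

theorem DnF2Set_subset_span_DnRelSet : DnF2Set K n ⊆ span (DnRelSet K n) := by
  rintro f (hf | ⟨k, hk2, hk3, rfl⟩) <;> apply subset_span
  · simp only [Set.mem_insert_iff, Set.mem_singleton_iff] at hf
    left
    rcases hf with rfl | rfl | rfl | rfl | rfl | rfl | rfl | rfl <;>
      simp only [Set.mem_insert_iff, Set.mem_singleton_iff, true_or, or_true]
  · rw [Dnadown_mul_Dnadown K n (by omega) (by omega), ← Dnacyc_eq_cyclePath]
    exact Or.inr ⟨k, by omega, by omega, rfl⟩

theorem DnRelSet_subset_span_DnF2Set (hn : 4 ≤ n) : DnRelSet K n ⊆ span (DnF2Set K n) := by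
  set J := comap (RingQuot.mkAlgHom K (DnQuivRel K n)) (span (DnF2Set K n))
  have hJ {x : DnFree K n} : x ∈ J ↔ Dnπ K n x ∈ span (DnF2Set K n) := mem_comap _
  have hF {x : DnFree K n} (hx : Dnπ K n x ∈ DnF2Set K n) : x ∈ J := hJ.2 (subset_span hx)
  obtain ⟨hβγ, hβδ, hα₁β₀, hβ₁α, hβ₁β₀, hγ₁γ₀⟩ :
      Dng K .b0 * Dng K .b1 - Dng K .c0 * Dng K .c1 ∈ J ∧
      Dng K .b0 * Dng K .b1 - Dnadown K n (n - 2) 1 ∈ J ∧ Dng K (.al 0) * Dng K .b0 ∈ J ∧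
      Dng K .b1 * Dng K (.al ((n - 3 : ℕ) : Fin (n - 2))) ∈ J ∧
      Dng K .b1 * Dng K .b0 ∈ J ∧ Dng K .c1 * Dng K .c0 ∈ J := by
    refine ⟨hF ?_, hF ?_, hF ?_, hF ?_, hF ?_, hF ?_⟩ <;> refine Or.inl ?_ <;>
      simp only [Set.mem_insert_iff, Set.mem_singleton_iff, true_or, or_true]
  rintro f (hf | ⟨j, hj1, hj2, rfl⟩)
  · simp only [Set.mem_insert_iff, Set.mem_singleton_iff] at hf
    rcases hf with rfl | rfl | rfl | rfl | rfl | rfl | rfl | rfl | rfl | rfl | rfl | rfl <;>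
      refine hJ.1 ?_
    iterate 8
      exact hF (Or.inl (by simp only [Set.mem_insert_iff, Set.mem_singleton_iff, true_or, or_true]))
    · rw [mul_mem_right_iff_of_sub_mem hβγ, mul_assoc]
      exact J.mul_mem_left _ _ hγ₁γ₀
    · rw [← mul_mem_right_iff_of_sub_mem hβγ, mul_assoc]
      exact J.mul_mem_left _ _ hβ₁β₀
    · rw [mul_assoc, ← mul_mem_left_iff_of_sub_mem hβγ, ← mul_assoc]
      exact J.mul_mem_right _ _ hβ₁β₀
    · rw [mul_assoc, mul_mem_left_iff_of_sub_mem hβγ, ← mul_assoc]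
      exact J.mul_mem_right _ _ hγ₁γ₀
  · refine hJ.1 ?_
    rw [Dnacyc_eq_cyclePath]
    rcases (by omega : j = 1 ∨ j = n - 2 ∨ (2 ≤ j ∧ j ≤ n - 3)) with rfl | rfl | ⟨hj2, hj3⟩
    · rw [← Dnadown_mul_Dnadown K n le_rfl (by omega), Dnadown_self,
        ← mul_mem_left_iff_of_sub_mem hβδ, ← mul_assoc]
      exact J.mul_mem_right _ _ hα₁β₀
    · rw [← Dnadown_mul_Dnadown K n (by omega) le_rfl, Dnadown_self,
        ← mul_mem_right_iff_of_sub_mem hβδ, mul_assoc, show n - 2 - 1 = n - 3 by omega]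
      exact J.mul_mem_left _ _ hβ₁α
    · rw [← Dnadown_mul_Dnadown K n (by omega) (by omega)]
      exact hF (Or.inr ⟨j, hj2, hj3, rfl⟩)

theorem span_DnF2Set_eq_span_DnRelSet (hn : 4 ≤ n) :
    span (DnF2Set K n) = span (DnRelSet K n) :=
  le_antisymm (span_le.2 (DnF2Set_subset_span_DnRelSet K))
    (span_le.2 (DnRelSet_subset_span_DnF2Set K hn))

end Span

/-- For any field `K` and `n ≥ 4`, the set `f²` of Proposition 5.3
is a minimal generating set for the defining ideal `I` of `Λ(D_n, 1, 2)` inside the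
path algebra `KQ`: it generates the two-sided ideal generated by the relations
`R(D_n, 1, 2)`, and no proper subset of `f²` generates it. -/
theorem f2_minimal_generating_Dn (K : Type) [Field K]
    (n : ℕ) [NeZero n] [NeZero (n - 2)] (hn : 4 ≤ n) :
    TwoSidedIdeal.span (DnF2Set K n) = TwoSidedIdeal.span (DnRelSet K n) ∧
    ∀ S : Set (DnPathAlg K n), S ⊆ DnF2Set K n →
      TwoSidedIdeal.span S = TwoSidedIdeal.span (DnRelSet K n) → S = DnF2Set K n := by
  refine ⟨span_DnF2Set_eq_span_DnRelSet K hn, fun S hS hspan => ?_⟩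
  rw [← span_DnF2Set_eq_span_DnRelSet K hn] at hspan
  exact TwoSidedIdeal.eq_of_span_eq_of_separated
    (fun f hf => exists_ringHom_separating_DnF2Set K hn hf) hS hspan
end
end

section
/- Let K be a field, m ≥ 3, and let Λ = KQ/I where Q has vertices 1,…,m, a loop β at vertex 1, arrows α_i: i → i+1 (mod m), and I is generated by β² − α₁⋯α_m, α_mα₁, and α_j⋯α_mβα₁⋯α_j for 2 ≤ j ≤ m−1 (the standard algebra Λ(D_{3m},1/3,1)). Then the set {e₁, β, β², β³} is linearly independent in e₁Λe₁, and β⁴ = 0 in Λ. -/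
noncomputable section

/-! ### The quiver of type `(D_{3m}, 1/3)`: vertices `1, …, m` (indexed by `Fin m`,
vertex `i+1` ↦ index `i`), a loop `β` at vertex `1`, and arrows `αᵢ : i → i+1` (mod `m`,
arrow `α_{i+1}` ↦ index `i`). -/

/-- Generators: idempotents `e i` for the vertices, arrows `a i` (the arrow
`α_{i+1} : i+1 → i+2 (mod m)`) and the loop `b` (the loop `β` at vertex `1`). -/
inductive DGen (m : ℕ) : Type
  | e (i : Fin m) : DGen m
  | a (i : Fin m) : DGen m
  | b : DGen m

variable (K : Type) [Field K]

/-- The free algebra on the generators. -/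
abbrev DFree (m : ℕ) : Type := FreeAlgebra K (DGen m)

/-- Generator as element of the free algebra. -/
abbrev Dg {m : ℕ} (g : DGen m) : DFree K m := FreeAlgebra.ι K g

open Fin.NatCast in
/-- The path `α_{j+1} α_{j+2} ⋯` of `len` arrows starting with arrow index `j` (cyclically). -/
def Dapath (m : ℕ) [NeZero m] (j len : ℕ) : DFree K m :=
  ((List.range len).map (fun t => Dg K (DGen.a ((j + t : ℕ) : Fin m)))).prod

/-- Relations presenting the path algebra structure of the quiver `Q(D_{3m}, 1/3)`:
the vertex idempotents are orthogonal, sum to `1`, and each arrow is supported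
at its source and target. -/
inductive DQuivRel (m : ℕ) [NeZero m] : DFree K m → DFree K m → Prop
  | idem (i j : Fin m) :
      DQuivRel m (Dg K (DGen.e i) * Dg K (DGen.e j)) (if i = j then Dg K (DGen.e i) else 0)
  | vsum : DQuivRel m (∑ i : Fin m, Dg K (DGen.e i)) 1
  | asrc (i : Fin m) : DQuivRel m (Dg K (DGen.e i) * Dg K (DGen.a i)) (Dg K (DGen.a i))
  | atgt (i : Fin m) : DQuivRel m (Dg K (DGen.a i) * Dg K (DGen.e (i + 1))) (Dg K (DGen.a i))
  | bsrc : DQuivRel m (Dg K (DGen.e 0) * Dg K DGen.b) (Dg K DGen.b)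
  | btgt : DQuivRel m (Dg K DGen.b * Dg K (DGen.e 0)) (Dg K DGen.b)

open Fin.NatCast in
/-- The relations of the standard algebra `Λ(D_{3m}, 1/3, 1)` (for `s = 1`):
`α₁α₂⋯α_m = β²`, `α_mα₁ = 0`, and `α_j⋯α_mβα₁⋯α_j = 0` for `2 ≤ j ≤ m−1`,
together with the path algebra relations of the quiver. -/
inductive DStdRel (m : ℕ) [NeZero m] : DFree K m → DFree K m → Prop
  | quiv {x y : DFree K m} : DQuivRel K m x y → DStdRel m x y
  | r1 : DStdRel m (Dapath K m 0 m) (Dg K DGen.b * Dg K DGen.b)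
  | r2 : DStdRel m (Dg K (DGen.a ((m - 1 : ℕ) : Fin m)) * Dg K (DGen.a 0)) 0
  | r3 (j : ℕ) (h1 : 2 ≤ j) (h2 : j ≤ m - 1) :
      DStdRel m (Dapath K m (j - 1) (m - (j - 1)) * Dg K DGen.b * Dapath K m 0 j) 0

open Fin.NatCast in
/-- The relations of the non-standard algebra `Λ(m)`:
`α₁α₂⋯α_m = β²`, `α_mα₁ = α_mβα₁`, and all `α`-paths of length `m+1` are zero,
together with the path algebra relations of the quiver. -/
inductive DNSRel (m : ℕ) [NeZero m] : DFree K m → DFree K m → Prop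
  | quiv {x y : DFree K m} : DQuivRel K m x y → DNSRel m x y
  | r1 : DNSRel m (Dapath K m 0 m) (Dg K DGen.b * Dg K DGen.b)
  | r2 : DNSRel m (Dg K (DGen.a ((m - 1 : ℕ) : Fin m)) * Dg K (DGen.a 0))
      (Dg K (DGen.a ((m - 1 : ℕ) : Fin m)) * Dg K DGen.b * Dg K (DGen.a 0))
  | r3 (i : Fin m) : DNSRel m (Dapath K m i (m + 1)) 0

/-- The standard algebra `Λ(D_{3m}, 1/3, 1)`. -/
abbrev DStdAlg (m : ℕ) [NeZero m] : Type := RingQuot (DStdRel K m)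

/-- The non-standard algebra `Λ(m)`. -/
abbrev DNSAlg (m : ℕ) [NeZero m] : Type := RingQuot (DNSRel K m)

/-! The right action of `Λ` on `e₁Λ` is realised by `0/1` matrices of partial maps on the
paths `β^b α₁⋯α_k` (`b ∈ {0, 1}`, `0 ≤ k ≤ m`), where `α₁⋯α_m = β²` and `βα₁⋯α_m = β³`.
In this representation the rows indexed by `e₁` of the images of `e₁, β, β², β³` are four
distinct unit vectors, which gives linear independence. On the other hand
`β⁴ = (α₁⋯α_m)(α₁⋯α_m)` contains the factor `α_mα₁ = 0`. -/

section PartialFunMatrix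

variable (R : Type*) [Semiring R] {l n p : Type*} [DecidableEq n]

def pfunMatrix (f : l → Option n) : Matrix l n R :=
  Matrix.of fun s t => if f s = some t then 1 else 0

theorem pfunMatrix_mul [Fintype n] [DecidableEq p] (f : l → Option n) (g : n → Option p) :
    pfunMatrix R f * pfunMatrix R g = pfunMatrix R (fun s => (f s).bind g) := by
  ext s u
  rw [Matrix.mul_apply]
  cases h : f s with
  | none => simp [pfunMatrix, h]
  | some t =>
    rw [Finset.sum_eq_single t (fun t' _ ht' => by simp [pfunMatrix, h, Ne.symm ht']) (by simp)]
    simp [pfunMatrix, h]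

theorem pfunMatrix_none : pfunMatrix R (fun _ : l => (none : Option n)) = 0 := by
  ext
  simp [pfunMatrix]

theorem pfunMatrix_row (f : l → Option n) (s : l) :
    pfunMatrix R f s = (f s).elim 0 (Pi.single · 1) := by
  ext t
  cases h : f s <;> simp [pfunMatrix, h, Pi.single_apply, eq_comm]

theorem sum_pfunMatrix_fiber [Fintype n] {ι : Type*} [Fintype ι] [DecidableEq ι] (v : n → ι) :
    ∑ i, pfunMatrix R (fun s => if v s = i then some s else none) = 1 := by
  ext s t
  rw [Matrix.sum_apply, Finset.sum_eq_single (v s) (fun i _ hi => by simp [pfunMatrix, Ne.symm hi])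
    (by simp)]
  simp [pfunMatrix, Matrix.one_apply]

end PartialFunMatrix

namespace DStd

open Fin.NatCast

variable {m : ℕ}

/-- `(b, k)` stands for the path `β^b α₁⋯α_k` from vertex `1`, so `(false, m)` is `β²` and
`(true, m)` is `β³`; it ends at the vertex with index `k mod m`. -/
abbrev Path1 (m : ℕ) : Type := Bool × Fin (m + 1)

def vertex [NeZero m] (s : Path1 m) : Fin m := ((s.2 : ℕ) : Fin m)

def idemAct [NeZero m] (i : Fin m) (s : Path1 m) : Option (Path1 m) :=
  if vertex s = i then some s else none

def arrowRun (j n : ℕ) (s : Path1 m) : Option (Path1 m) :=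
  if h : (s.2 : ℕ) = j ∧ j + n ≤ m then some (s.1, ⟨j + n, by omega⟩) else none

def loopAct : Path1 m → Option (Path1 m)
  | (false, k) => if k = 0 ∨ k = Fin.last m then some (true, k) else none
  | (true, k) => if k = 0 then some (false, Fin.last m) else none

theorem vertex_eq_zero_iff [NeZero m] {s : Path1 m} :
    vertex s = 0 ↔ s.2 = 0 ∨ s.2 = Fin.last m := by
  obtain ⟨_, k, hk⟩ := s
  rw [vertex, Fin.natCast_eq_zero]
  simp only [Fin.ext_iff, Fin.val_zero, Fin.val_last]
  constructor
  · rintro ⟨c, hc⟩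
    rcases Nat.eq_zero_or_pos c with rfl | hc0
    · simp [hc]
    · right
      nlinarith
  · rintro (rfl | rfl) <;> simp

theorem idemAct_bind_idemAct [NeZero m] (i j : Fin m) (s : Path1 m) :
    (idemAct i s).bind (idemAct j) = if i = j then idemAct i s else none := by
  unfold idemAct
  split_ifs <;> simp_all

theorem idemAct_bind_arrowRun [NeZero m] (i : Fin m) (s : Path1 m) :
    (idemAct i s).bind (arrowRun i 1) = arrowRun i 1 s := by
  unfold idemAct
  split_ifs with hv
  · rfl
  · refine (dif_neg ?_ : arrowRun i 1 s = none).symm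
    rintro ⟨h, -⟩
    exact hv (by rw [vertex, h, Fin.cast_val_eq_self])

theorem arrowRun_bind_idemAct [NeZero m] (i : Fin m) (s : Path1 m) :
    (arrowRun i 1 s).bind (idemAct (i + 1)) = arrowRun i 1 s := by
  unfold idemAct arrowRun
  split_ifs <;> simp [vertex]

theorem idemAct_bind_loopAct [NeZero m] (s : Path1 m) :
    (idemAct 0 s).bind loopAct = loopAct s := by
  unfold idemAct
  split_ifs with hv
  · rfl
  · rw [vertex_eq_zero_iff] at hv
    obtain ⟨_ | _, k⟩ := s <;> simp_all [loopAct]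

theorem loopAct_bind_idemAct [NeZero m] (s : Path1 m) :
    (loopAct s).bind (idemAct 0) = loopAct s := by
  obtain ⟨_ | _, k⟩ := s <;> simp only [loopAct] <;> split_ifs <;>
    simp_all [idemAct, vertex_eq_zero_iff]

theorem arrowRun_bind_arrowRun (j n n' : ℕ) (s : Path1 m) :
    (arrowRun j n s).bind (arrowRun (j + n) n') = arrowRun j (n + n') s := by
  unfold arrowRun
  split_ifs <;> simp_all <;> omega

theorem arrowRun_bind_arrowRun_of_ne {j n j' : ℕ} (h : j + n ≠ j') (n' : ℕ) (s : Path1 m) :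
    (arrowRun j n s).bind (arrowRun j' n') = none := by
  unfold arrowRun
  split_ifs <;> simp_all

theorem arrowRun_zero_eq_loopAct_bind_loopAct [NeZero m] (s : Path1 m) :
    arrowRun 0 m s = (loopAct s).bind loopAct := by
  obtain ⟨b, k⟩ := s
  by_cases hk : k = 0
  · subst hk
    cases b <;> simp [arrowRun, loopAct, NeZero.ne m, Fin.ext_iff]
  · have hk' : (k : ℕ) ≠ 0 := fun h => hk (Fin.ext h)
    by_cases hkl : k = Fin.last m
    · subst hkl
      cases b <;> simp [arrowRun, loopAct, NeZero.ne m]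
    · cases b <;> simp [arrowRun, loopAct, hk, hkl, hk']

theorem arrowRun_bind_loopAct_bind_arrowRun [NeZero m] (j n : ℕ) (s : Path1 m) :
    ((arrowRun j (m - j) s).bind loopAct).bind (arrowRun 0 n) = none := by
  unfold arrowRun
  split_ifs with h
  · have hlast : (⟨j + (m - j), by omega⟩ : Fin (m + 1)) = Fin.last m := by
      ext
      simp only [Fin.val_last]
      omega
    rw [hlast]
    cases s.1 <;> simp [loopAct, NeZero.ne m]
  · rfl

theorem Dapath_add [NeZero m] (j n n' : ℕ) :
    Dapath K m j (n + n') = Dapath K m j n * Dapath K m (j + n) n' := by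
  simp only [Dapath, List.range_add, List.map_append, List.prod_append, List.map_map]
  congr 3
  funext t
  simp [add_assoc]

theorem Dapath_one [NeZero m] (j : ℕ) : Dapath K m j 1 = Dg K (DGen.a (j : Fin m)) := by
  simp [Dapath]

def genAct [NeZero m] : DGen m → Path1 m → Option (Path1 m)
  | .e i => idemAct i
  | .a i => arrowRun i 1
  | .b => loopAct

variable (m) in
def pathRep [NeZero m] : DFree K m →ₐ[K] Matrix (Path1 m) (Path1 m) K :=
  FreeAlgebra.lift K fun g => pfunMatrix K (genAct g)

@[simp]
theorem pathRep_Dg [NeZero m] (g : DGen m) : pathRep K m (Dg K g) = pfunMatrix K (genAct g) :=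
  FreeAlgebra.lift_ι_apply _ _

theorem pathRep_Dapath [NeZero m] {j n : ℕ} (hn : 0 < n) (h : j + n ≤ m) :
    pathRep K m (Dapath K m j n) = pfunMatrix K (arrowRun j n) := by
  induction n, hn using Nat.le_induction with
  | base => rw [Dapath_one, pathRep_Dg, genAct, Fin.val_cast_of_lt (by omega)]
  | succ n hn ih =>
    rw [Dapath_add, map_mul, ih (by omega), Dapath_one, pathRep_Dg, genAct,
      Fin.val_cast_of_lt (by omega), pfunMatrix_mul]
    simp only [arrowRun_bind_arrowRun]

theorem pathRep_eq_of_quivRel [NeZero m] {x y : DFree K m} (h : DQuivRel K m x y) :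
    pathRep K m x = pathRep K m y := by
  cases h with
  | idem i j =>
    rw [map_mul, pathRep_Dg, pathRep_Dg, pfunMatrix_mul]
    simp only [genAct, idemAct_bind_idemAct]
    split_ifs
    · rw [pathRep_Dg]
      rfl
    · rw [map_zero, ← pfunMatrix_none]
  | vsum =>
    simp only [map_sum, pathRep_Dg, genAct, map_one]
    exact sum_pfunMatrix_fiber K vertex
  | asrc i =>
    rw [map_mul, pathRep_Dg, pathRep_Dg, pfunMatrix_mul]
    simp only [genAct, idemAct_bind_arrowRun]
  | atgt i =>
    rw [map_mul, pathRep_Dg, pathRep_Dg, pfunMatrix_mul]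
    simp only [genAct, arrowRun_bind_idemAct]
  | bsrc =>
    rw [map_mul, pathRep_Dg, pathRep_Dg, pfunMatrix_mul]
    simp only [genAct, idemAct_bind_loopAct]
  | btgt =>
    rw [map_mul, pathRep_Dg, pathRep_Dg, pfunMatrix_mul]
    simp only [genAct, loopAct_bind_idemAct]

theorem pathRep_eq_of_stdRel [NeZero m] {x y : DFree K m} (h : DStdRel K m x y) :
    pathRep K m x = pathRep K m y := by
  cases h with
  | quiv h => exact pathRep_eq_of_quivRel K h
  | r1 =>
    rw [pathRep_Dapath K (NeZero.pos m) (by omega), map_mul, pathRep_Dg, pfunMatrix_mul]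
    exact congrArg _ (funext arrowRun_zero_eq_loopAct_bind_loopAct)
  | r2 =>
    rw [map_mul, pathRep_Dg, pathRep_Dg, pfunMatrix_mul, map_zero, ← pfunMatrix_none]
    simp only [genAct, Fin.val_cast_of_lt (Nat.sub_lt (NeZero.pos m) one_pos), Fin.val_zero]
    exact congrArg _ (funext (arrowRun_bind_arrowRun_of_ne (by have := NeZero.pos m; omega) 1))
  | r3 j h1 h2 =>
    rw [map_mul, map_mul, pathRep_Dapath K (by omega) (by omega),
      pathRep_Dapath K (by omega) (by omega), pathRep_Dg, pfunMatrix_mul, pfunMatrix_mul,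
      map_zero, ← pfunMatrix_none]
    exact congrArg _ (funext (arrowRun_bind_loopAct_bind_arrowRun _ _))

variable (m) in
def stdRep [NeZero m] : DStdAlg K m →ₐ[K] Matrix (Path1 m) (Path1 m) K :=
  RingQuot.liftAlgHom K ⟨pathRep K m, fun _ _ => pathRep_eq_of_stdRel K⟩

theorem stdRep_mkAlgHom [NeZero m] (x : DFree K m) :
    stdRep K m (RingQuot.mkAlgHom K (DStdRel K m) x) = pathRep K m x :=
  RingQuot.liftAlgHom_mkAlgHom_apply _ _ _ _

theorem linearIndependent_idem_loop_pows [NeZero m] :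
    LinearIndependent K ![RingQuot.mkAlgHom K (DStdRel K m) (Dg K (DGen.e 0)),
      RingQuot.mkAlgHom K (DStdRel K m) (Dg K DGen.b),
      RingQuot.mkAlgHom K (DStdRel K m) (Dg K DGen.b) ^ 2,
      RingQuot.mkAlgHom K (DStdRel K m) (Dg K DGen.b) ^ 3] := by
  let c : Fin 4 → Path1 m := ![(false, 0), (true, 0), (false, Fin.last m), (true, Fin.last m)]
  have hc : Function.Injective c := by
    intro i j
    fin_cases i <;> fin_cases j <;> simp [c, Fin.ext_iff, NeZero.ne m, (NeZero.ne m).symm]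
  let row := LinearMap.proj (R := K) (φ := fun _ : Path1 m => Path1 m → K) (false, 0)
  have hrow (x) : (row ∘ₗ (stdRep K m).toLinearMap) x = stdRep K m x (false, 0) := rfl
  refine LinearIndependent.of_comp (row ∘ₗ (stdRep K m).toLinearMap) ?_
  convert (Pi.basisFun K (Path1 m)).linearIndependent.comp c hc using 1
  funext i
  fin_cases i <;>
    simp [hrow, c, stdRep_mkAlgHom, genAct, pow_succ, pfunMatrix_mul, pfunMatrix_row,
      idemAct, vertex, loopAct, NeZero.ne m]

theorem mkAlgHom_loop_pow_four_eq_zero [NeZero m] :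
    RingQuot.mkAlgHom K (DStdRel K m) (Dg K DGen.b) ^ 4 = 0 := by
  set π := RingQuot.mkAlgHom K (DStdRel K m)
  have hsq : π (Dg K DGen.b) ^ 2 = π (Dapath K m 0 m) := by
    rw [sq, ← map_mul]
    exact (RingQuot.mkAlgHom_rel K DStdRel.r1).symm
  have hα : π (Dg K (DGen.a ((m - 1 : ℕ) : Fin m)) * Dg K (DGen.a 0)) = 0 :=
    (RingQuot.mkAlgHom_rel K DStdRel.r2).trans (map_zero π)
  have hm : m - 1 + 1 = m := Nat.sub_add_cancel NeZero.one_le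
  have hsnoc := Dapath_add K (m := m) 0 (m - 1) 1
  have hcons := Dapath_add K (m := m) 0 1 (m - 1)
  rw [hm, Dapath_one, zero_add] at hsnoc
  rw [add_comm, hm, Dapath_one, zero_add] at hcons
  have hsplit : Dapath K m 0 m * Dapath K m 0 m = Dapath K m 0 (m - 1) *
      (Dg K (DGen.a ((m - 1 : ℕ) : Fin m)) * Dg K (DGen.a 0)) * Dapath K m 1 (m - 1) := by
    nth_rw 1 [hsnoc]
    rw [hcons]
    simp only [mul_assoc, Nat.cast_zero]
  calc π (Dg K DGen.b) ^ 4 = π (Dapath K m 0 m * Dapath K m 0 m) := by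
        rw [map_mul, ← hsq, ← pow_add]
    _ = 0 := by rw [hsplit, map_mul, map_mul, hα, mul_zero, zero_mul]

end DStd

theorem beta_powers_std_D3m_general (K : Type) [Field K] (m : ℕ) [NeZero m]
    (e1 β : DStdAlg K m)
    (he1 : e1 = RingQuot.mkAlgHom K (DStdRel K m) (Dg K (DGen.e 0)))
    (hβ : β = RingQuot.mkAlgHom K (DStdRel K m) (Dg K DGen.b)) :
    LinearIndependent K ![e1, β, β ^ 2, β ^ 3] ∧ β ^ 4 = 0 := by
  subst he1 hβ
  exact ⟨DStd.linearIndependent_idem_loop_pows K, DStd.mkAlgHom_loop_pow_four_eq_zero K⟩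

/-- In the standard algebra `Λ = Λ(D_{3m}, 1/3, 1)` with `m ≥ 3`
(over any field `K`), the set `{e₁, β, β², β³}` is linearly independent in `e₁Λe₁`,
and `β⁴ = 0` in `Λ`. -/
theorem beta_powers_std_D3m (K : Type) [Field K] (m : ℕ) [NeZero m] (hm : 3 ≤ m)
    (e1 β : DStdAlg K m)
    (he1 : e1 = RingQuot.mkAlgHom K (DStdRel K m) (Dg K (DGen.e 0)))
    (hβ : β = RingQuot.mkAlgHom K (DStdRel K m) (Dg K DGen.b)) :
    LinearIndependent K ![e1, β, β ^ 2, β ^ 3] ∧ β ^ 4 = 0 :=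
  beta_powers_std_D3m_general K m e1 β he1 hβ
end
end
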